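/- Let x = a → b and y = c → d be types with ord(x) = ord(y), and let M : x and N : y. Then there exists a unique complex-linear map P ∈ L(x ⊛ y) = Hom(L(a ⊛ c), L(b ⊛ d)) satisfying P(ρ ⊛ σ) = M(ρ) ⊛ N(σ) for all ρ ∈ L(a) and σ ∈ L(c); i.e. the symmetric case of the parallel product of maps is well defined. -/

import Mathlib

inductive Ty (Λ : Type) : Type
  | elem : List Λ → Ty Λ
  | arrow : Ty Λ → Ty Λ → Ty Λ

namespace Ty

variable {Λ : Type}

def ord : Ty Λ → ℕ
  | elem _ => 0
  | arrow a b => 1 + max a.ord b.ord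

def par : Ty Λ → Ty Λ → Ty Λ
  | elem v, elem w => elem (v ++ w)
  | elem v, arrow c d => arrow c (par (elem v) d)
  | arrow a b, elem w => arrow a (par b (elem w))
  | arrow a b, arrow c d =>
    if (arrow a b).ord < (arrow c d).ord then arrow c (par (arrow a b) d)
    else if (arrow a b).ord = (arrow c d).ord then arrow (par a c) (par b d)
    else arrow a (par b (arrow c d))

theorem ord_par (x y : Ty Λ) : (x.par y).ord = max x.ord y.ord := by
  induction x, y using par.induct with
  | case1 v w => simp [par, ord]
  | case2 v c d ih => simp_all [par, ord]
  | case3 a b w ih => simp_all [par, ord]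
  | case4 a b c d h ih => rw [par, if_pos h]; simp_all [ord]; omega
  | case5 a b c d h1 h2 ih1 ih2 => rw [par, if_neg h1, if_pos h2]; simp_all [ord]; omega
  | case6 a b c d h1 h2 ih => rw [par, if_neg h1, if_neg h2]; simp_all [ord]; omega

theorem par_elem_elem (v w : List Λ) : (elem v).par (elem w) = elem (v ++ w) := by
  rw [par]

theorem par_arrow_arrow {a b c d : Ty Λ} (h : (arrow a b).ord = (arrow c d).ord) :
    (arrow a b).par (arrow c d) = arrow (a.par c) (b.par d) := by
  rw [par, if_neg (by omega), if_pos h]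

theorem par_lt {x c d : Ty Λ} (h : x.ord < (arrow c d).ord) :
    x.par (arrow c d) = arrow c (x.par d) := by
  cases x with
  | elem v => rw [par]
  | arrow a b => rw [par, if_pos h]

theorem par_gt {a b y : Ty Λ} (h : y.ord < (arrow a b).ord) :
    (arrow a b).par y = arrow a (b.par y) := by
  cases y with
  | elem w => rw [par]
  | arrow c d => rw [par, if_neg (by omega), if_neg (by omega)]

end Ty
namespace HigherOrder

open scoped TensorProduct ComplexOrder

variable {Λ : Type} (dm : Λ → ℕ)

def dimw (w : List Λ) : ℕ := (w.map dm).prod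

theorem dimw_append (v w : List Λ) : dimw dm (v ++ w) = dimw dm v * dimw dm w := by
  simp [dimw]

noncomputable def L : Ty Λ → ModuleCat ℂ
  | .elem w => ModuleCat.of ℂ (Matrix (Fin (dimw dm w)) (Fin (dimw dm w)) ℂ)
  | .arrow a b => ModuleCat.of ℂ (↑(L a) →ₗ[ℂ] ↑(L b))

def toHom {a b : Ty Λ} (M : ↑(L dm (Ty.arrow a b))) : ↑(L dm a) →ₗ[ℂ] ↑(L dm b) := M

def ofHom {a b : Ty Λ} (f : ↑(L dm a) →ₗ[ℂ] ↑(L dm b)) : ↑(L dm (Ty.arrow a b)) := f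

def toMat {w : List Λ} (A : ↑(L dm (Ty.elem w))) :
    Matrix (Fin (dimw dm w)) (Fin (dimw dm w)) ℂ := A

def ofMat {w : List Λ} (A : Matrix (Fin (dimw dm w)) (Fin (dimw dm w)) ℂ) :
    ↑(L dm (Ty.elem w)) := A

noncomputable def app {a b : Ty Λ} (M : ↑(L dm (Ty.arrow a b))) (ρ : ↑(L dm a)) : ↑(L dm b) :=
  toHom dm M ρ

instance instFinDimL (x : Ty Λ) : FiniteDimensional ℂ ↑(L dm x) := by
  induction x with
  | elem w => exact inferInstanceAs (FiniteDimensional ℂ (Matrix _ _ ℂ))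
  | arrow a b iha ihb => exact inferInstanceAs (FiniteDimensional ℂ (↑(L dm a) →ₗ[ℂ] ↑(L dm b)))

noncomputable def castL {x y : Ty Λ} (h : x = y) : ↑(L dm x) ≃ₗ[ℂ] ↑(L dm y) :=
  h ▸ LinearEquiv.refl ℂ ↑(L dm x)

/-- `L (arrow a b)` is (by definition) a space of linear maps. -/
noncomputable def homEquivL (a b : Ty Λ) :
    ↑(L dm (Ty.arrow a b)) ≃ₗ[ℂ] (↑(L dm a) →ₗ[ℂ] ↑(L dm b)) :=
  { toFun := toHom dm, invFun := ofHom dm, map_add' := fun _ _ => rfl,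
    map_smul' := fun _ _ => rfl, left_inv := fun _ => rfl, right_inv := fun _ => rfl }

/-- `L (elem w)` is (by definition) a space of matrices. -/
noncomputable def matEquivL (w : List Λ) :
    ↑(L dm (Ty.elem w)) ≃ₗ[ℂ] Matrix (Fin (dimw dm w)) (Fin (dimw dm w)) ℂ :=
  { toFun := toMat dm, invFun := ofMat dm, map_add' := fun _ _ => rfl,
    map_smul' := fun _ _ => rfl, left_inv := fun _ => rfl, right_inv := fun _ => rfl }

/-- The parallel product on the level of spaces: the canonical identification of
`L x ⊗ L y` with `L (x ⊛ y)`. -/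
noncomputable def parEquiv : (x y : Ty Λ) →
    (↑(L dm x) ⊗[ℂ] ↑(L dm y)) ≃ₗ[ℂ] ↑(L dm (x.par y))
  | .elem v, .elem w =>
      (TensorProduct.congr (matEquivL dm v) (matEquivL dm w)) ≪≫ₗ
      ((Matrix.stdBasis ℂ (Fin (dimw dm v)) (Fin (dimw dm v))).tensorProduct
          (Matrix.stdBasis ℂ (Fin (dimw dm w)) (Fin (dimw dm w)))).equiv
        (Matrix.stdBasis ℂ (Fin (dimw dm v) × Fin (dimw dm w))
          (Fin (dimw dm v) × Fin (dimw dm w)))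
        (Equiv.prodProdProdComm _ _ _ _) ≪≫ₗ
      Matrix.reindexLinearEquiv ℂ ℂ finProdFinEquiv finProdFinEquiv ≪≫ₗ
      Matrix.reindexLinearEquiv ℂ ℂ (finCongr (dimw_append dm v w).symm)
        (finCongr (dimw_append dm v w).symm) ≪≫ₗ
      (matEquivL dm (v ++ w)).symm ≪≫ₗ
      castL dm (Ty.par_elem_elem v w).symm
  | .elem v, .arrow c d =>
      (TensorProduct.congr (LinearEquiv.refl ℂ _) (homEquivL dm c d)) ≪≫ₗ
      lTensorHomEquivHomLTensor ℂ ↑(L dm c) ↑(L dm (Ty.elem v)) ↑(L dm d) ≪≫ₗ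
      LinearEquiv.arrowCongr (LinearEquiv.refl ℂ _) (parEquiv (Ty.elem v) d) ≪≫ₗ
      (homEquivL dm c ((Ty.elem v).par d)).symm ≪≫ₗ
      castL dm (Ty.par_lt (by simp [Ty.ord])).symm
  | .arrow a b, .elem w =>
      (TensorProduct.congr (homEquivL dm a b) (LinearEquiv.refl ℂ _)) ≪≫ₗ
      rTensorHomEquivHomRTensor ℂ ↑(L dm a) ↑(L dm b) ↑(L dm (Ty.elem w)) ≪≫ₗ
      LinearEquiv.arrowCongr (LinearEquiv.refl ℂ _) (parEquiv b (Ty.elem w)) ≪≫ₗ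
      (homEquivL dm a (b.par (Ty.elem w))).symm ≪≫ₗ
      castL dm (Ty.par_gt (by simp [Ty.ord])).symm
  | .arrow a b, .arrow c d =>
      if h : (Ty.arrow a b).ord < (Ty.arrow c d).ord then
        (TensorProduct.congr (LinearEquiv.refl ℂ _) (homEquivL dm c d)) ≪≫ₗ
        lTensorHomEquivHomLTensor ℂ ↑(L dm c) ↑(L dm (Ty.arrow a b)) ↑(L dm d) ≪≫ₗ
        LinearEquiv.arrowCongr (LinearEquiv.refl ℂ _) (parEquiv (Ty.arrow a b) d) ≪≫ₗ
        (homEquivL dm c ((Ty.arrow a b).par d)).symm ≪≫ₗ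
        castL dm (Ty.par_lt h).symm
      else if h2 : (Ty.arrow a b).ord = (Ty.arrow c d).ord then
        (TensorProduct.congr (homEquivL dm a b) (homEquivL dm c d)) ≪≫ₗ
        homTensorHomEquiv ℂ ↑(L dm a) ↑(L dm c) ↑(L dm b) ↑(L dm d) ≪≫ₗ
        LinearEquiv.arrowCongr (parEquiv a c) (parEquiv b d) ≪≫ₗ
        (homEquivL dm (a.par c) (b.par d)).symm ≪≫ₗ
        castL dm (Ty.par_arrow_arrow h2).symm
      else
        (TensorProduct.congr (homEquivL dm a b) (LinearEquiv.refl ℂ _)) ≪≫ₗ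
        rTensorHomEquivHomRTensor ℂ ↑(L dm a) ↑(L dm b) ↑(L dm (Ty.arrow c d)) ≪≫ₗ
        LinearEquiv.arrowCongr (LinearEquiv.refl ℂ _) (parEquiv b (Ty.arrow c d)) ≪≫ₗ
        (homEquivL dm a (b.par (Ty.arrow c d))).symm ≪≫ₗ
        castL dm (Ty.par_gt (by omega)).symm

/-- The parallel product of higher-order maps. -/
noncomputable def parMap {x y : Ty Λ} (M : ↑(L dm x)) (N : ↑(L dm y)) : ↑(L dm (x.par y)) :=
  parEquiv dm x y (M ⊗ₜ[ℂ] N)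

/-- The identity map, as an element of `L (z → z)`. -/
noncomputable def idL (z : Ty Λ) : ↑(L dm (Ty.arrow z z)) :=
  ofHom dm (LinearMap.id)

/-- The family of sets of Hermitian / Hs-preserving maps. -/
noncomputable def Hs : (x : Ty Λ) → Set ↑(L dm x)
  | .elem w => {A | (toMat dm A).IsHermitian}
  | .arrow a b => {M | ∀ ρ ∈ Hs a, app dm M ρ ∈ Hs b}

/-- The family of cones of positive semidefinite / completely K-preserving maps. -/
noncomputable def K : (x : Ty Λ) → Set ↑(L dm x)
  | .elem _ => {A | (toMat dm A).PosSemidef}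
  | .arrow a b => {M | ∀ z : Ty Λ, ∀ hz : (Ty.arrow z z).ord = (Ty.arrow a b).ord,
      ∀ ρ ∈ K (a.par z),
        app dm (castL dm (Ty.par_arrow_arrow hz.symm) (parMap dm M (idL dm z))) ρ ∈ K (b.par z)}
  termination_by x => x.ord
  decreasing_by
  all_goals (simp only [Ty.ord_par, Ty.ord] at hz ⊢; omega)

end HigherOrder

namespace TensorProduct

variable {R M N M' N' P Q : Type*} [CommSemiring R]
  [AddCommMonoid M] [AddCommMonoid N] [AddCommMonoid M'] [AddCommMonoid N']
  [AddCommMonoid P] [AddCommMonoid Q]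
  [Module R M] [Module R N] [Module R M'] [Module R N'] [Module R P] [Module R Q]

theorem existsUnique_map_conj (e : M ⊗[R] N ≃ₗ[R] P) (e' : M' ⊗[R] N' ≃ₗ[R] Q)
    (f : M →ₗ[R] M') (g : N →ₗ[R] N') :
    ∃! φ : P →ₗ[R] Q, ∀ x y, φ (e (x ⊗ₜ y)) = e' (f x ⊗ₜ g y) := by
  refine ⟨e'.toLinearMap ∘ₗ map f g ∘ₗ e.symm.toLinearMap, fun x y => by simp, ?_⟩
  intro φ hφ
  have on_pure : φ ∘ₗ e.toLinearMap = e'.toLinearMap ∘ₗ map f g :=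
    TensorProduct.ext' hφ
  rw [← LinearMap.comp_assoc, ← on_pure]
  ext p
  simp

end TensorProduct

open HigherOrder in
theorem symmetric_parallel_product_well_defined_general {Λ : Type} (dm : Λ → ℕ) (a b c d : Ty Λ)
    (M : ↑(L dm (Ty.arrow a b))) (N : ↑(L dm (Ty.arrow c d))) :
    ∃! P : ↑(L dm (a.par c)) →ₗ[ℂ] ↑(L dm (b.par d)),
      ∀ (ρ : ↑(L dm a)) (σ : ↑(L dm c)),
        P (parMap dm ρ σ) = parMap dm (app dm M ρ) (app dm N σ) :=
  TensorProduct.existsUnique_map_conj (parEquiv dm a c) (parEquiv dm b d)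
    (toHom dm M) (toHom dm N)

open HigherOrder in
/-- Well-definedness of the symmetric case of the parallel product of maps: given
`M : a → b` and `N : c → d` with `ord (a → b) = ord (c → d)`, there is a unique linear map
`P ∈ L((a → b) ⊛ (c → d)) = Hom(L (a ⊛ c), L (b ⊛ d))` with
`P (ρ ⊛ σ) = M ρ ⊛ N σ` for all `ρ : a`, `σ : c`. -/
theorem symmetric_parallel_product_well_defined {Λ : Type} (dm : Λ → ℕ) (a b c d : Ty Λ)
    (h : (Ty.arrow a b).ord = (Ty.arrow c d).ord)
    (M : ↑(L dm (Ty.arrow a b))) (N : ↑(L dm (Ty.arrow c d))) :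
    ∃! P : ↑(L dm (a.par c)) →ₗ[ℂ] ↑(L dm (b.par d)),
      ∀ (ρ : ↑(L dm a)) (σ : ↑(L dm c)),
        P (parMap dm ρ σ) = parMap dm (app dm M ρ) (app dm N σ) :=
  symmetric_parallel_product_well_defined_general dm a b c d M N
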